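/- arXiv:cond-mat/0603243 — 6 statements merged into one kernel-verified Lean document; each statement's English description precedes it below -/
import Mathlib

section
/- Let N ≥ 2, n ≥ 1, α : Fin n → Fin n → ℝ, and let λ : Fin n → Fin n → ℝ be strictly positive transition rates satisfying α(k,l) − α(l,k) = log(λ(k,l)/λ(l,k)) for all k, l. For a configuration X : Fin N → Fin n let H(X) = Σ_{i<j} α(X_i, X_j). If X has X_i = k, X_{i+1} = l at adjacent sites i, i+1 and X' is obtained from X by swapping these two values, then the detailed balance relation exp(−H(X)) · λ(k,l) = exp(−H(X')) · λ(l,k) holds. -/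
/-!
Exchanging the letters at sites `i` and `i + 1` turns `X` into `X ∘ σ` with `σ` the transposition
of two adjacent sites. Such a `σ` preserves the order of every pair of sites except `(i, i + 1)`,
so it permutes the remaining increasing pairs and `H(X) - H(X') = α(k,l) - α(l,k)`, which the
rate condition identifies with `log (λ(k,l) / λ(l,k))`.
-/

open Finset

/-- Energy of a configuration of the `n`-letter exclusion model on `N` sites:
`H(X) = ∑_{i<j} α(X i, X j)`. -/
noncomputable def energy {N n : ℕ} (α : Fin n → Fin n → ℝ) (X : Fin N → Fin n) : ℝ :=
  ∑ p ∈ Finset.univ.filter (fun p : Fin N × Fin N => p.1 < p.2), α (X p.1) (X p.2)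

section SwapCovBy

variable {ι : Type*} [LinearOrder ι] {a b : ι}

lemma Equiv.swap_apply_lt_swap_apply_of_covBy (hab : a ⋖ b) {x y : ι} (hxy : x < y)
    (hne : (x, y) ≠ (a, b)) : Equiv.swap a b x < Equiv.swap a b y := by
  by_cases hxa : x = a
  · subst hxa
    have hyb : y ≠ b := fun h => hne (by rw [h])
    rw [Equiv.swap_apply_left, Equiv.swap_apply_of_ne_of_ne hxy.ne' hyb]
    exact lt_of_le_of_ne (hab.ge_of_gt hxy) hyb.symm
  by_cases hxb : x = b
  · subst hxb
    rw [Equiv.swap_apply_right, Equiv.swap_apply_of_ne_of_ne (hab.lt.trans hxy).ne' hxy.ne']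
    exact hab.lt.trans hxy
  rw [Equiv.swap_apply_of_ne_of_ne hxa hxb]
  by_cases hya : y = a
  · rw [hya, Equiv.swap_apply_left]
    exact (hya ▸ hxy).trans hab.lt
  by_cases hyb : y = b
  · rw [hyb, Equiv.swap_apply_right]
    exact lt_of_le_of_ne (hab.le_of_lt (hyb ▸ hxy)) hxa
  rwa [Equiv.swap_apply_of_ne_of_ne hya hyb]

lemma sum_lt_pairs_comp_swap_add [Fintype ι] {M : Type*} [AddCommMonoid M] (hab : a ⋖ b)
    (f : ι → ι → M) :
    ∑ p ∈ univ.filter (fun p : ι × ι => p.1 < p.2), f (Equiv.swap a b p.1) (Equiv.swap a b p.2)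
        + f a b =
      ∑ p ∈ univ.filter (fun p : ι × ι => p.1 < p.2), f p.1 p.2 + f b a := by
  set S := univ.filter (fun p : ι × ι => p.1 < p.2)
  set σ := Equiv.swap a b
  have hab_mem : (a, b) ∈ S := by simpa [S] using hab.lt
  have hmaps : ∀ p ∈ S.erase (a, b), σ.prodCongr σ p ∈ S.erase (a, b) := by
    rintro ⟨x, y⟩ hp
    simp only [S, mem_erase, mem_filter, mem_univ, true_and, Equiv.prodCongr_apply,
      Prod.map, ne_eq, Prod.mk.injEq] at hp ⊢
    refine ⟨fun ⟨hx, hy⟩ => ?_, Equiv.swap_apply_lt_swap_apply_of_covBy hab hp.2 ?_⟩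
    · rw [Equiv.swap_apply_eq_iff, Equiv.swap_apply_left] at hx
      rw [Equiv.swap_apply_eq_iff, Equiv.swap_apply_right] at hy
      exact lt_asymm hab.lt (hx ▸ hy ▸ hp.2)
    · simpa only [ne_eq, Prod.mk.injEq] using hp.1
  have hinvolutive : ∀ p, σ.prodCongr σ (σ.prodCongr σ p) = p := fun p =>
    Prod.ext (Equiv.swap_apply_self a b p.1) (Equiv.swap_apply_self a b p.2)
  have herase : ∑ p ∈ S.erase (a, b), f (σ p.1) (σ p.2) = ∑ p ∈ S.erase (a, b), f p.1 p.2 :=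
    sum_equiv (σ.prodCongr σ)
      (fun p => ⟨hmaps p, fun h => hinvolutive p ▸ hmaps _ h⟩) (fun _ _ => rfl)
  rw [← sum_erase_add S _ hab_mem, ← sum_erase_add S _ hab_mem, herase]
  simp only [σ, Equiv.swap_apply_left, Equiv.swap_apply_right]
  abel

end SwapCovBy

lemma eq_comp_swap_of_swapped {ι κ : Type*} [DecidableEq ι] {X X' : ι → κ} {a b : ι}
    (ha : X' a = X b) (hb : X' b = X a) (hother : ∀ j, j ≠ a → j ≠ b → X' j = X j) :
    X' = X ∘ Equiv.swap a b := by
  funext j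
  rw [Function.comp_apply, Equiv.swap_apply_def]
  split_ifs with hja hjb
  · rw [hja, ha]
  · rw [hjb, hb]
  · exact hother j hja hjb

lemma energy_comp_swap_add {N n : ℕ} (α : Fin n → Fin n → ℝ) (X : Fin N → Fin n)
    {a b : Fin N} (hab : a ⋖ b) :
    energy α (X ∘ Equiv.swap a b) + α (X a) (X b) = energy α X + α (X b) (X a) :=
  sum_lt_pairs_comp_swap_add hab fun x y => α (X x) (X y)

/-- Detailed balance for the Gibbs weight `exp(−H)` with rates satisfying
`α(k,l) − α(l,k) = log(λ(k,l)/λ(l,k))`: if `X'` is obtained from `X` by swapping the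
letters `k`, `l` at adjacent sites, then `exp(−H(X))·λ(k,l) = exp(−H(X'))·λ(l,k)`. -/
theorem detailed_balance_swap (N n : ℕ)
    (α : Fin n → Fin n → ℝ) (lam : Fin n → Fin n → ℝ)
    (hpos : ∀ k l : Fin n, 0 < lam k l)
    (hrate : ∀ k l : Fin n, α k l - α l k = Real.log (lam k l / lam l k))
    (X X' : Fin N → Fin n)
    (i : ℕ) (hi : i + 1 < N) (k l : Fin n)
    (hXi : X ⟨i, by omega⟩ = k) (hXi1 : X ⟨i + 1, hi⟩ = l)
    (hX'i : X' ⟨i, by omega⟩ = l) (hX'i1 : X' ⟨i + 1, hi⟩ = k)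
    (hX'other : ∀ j : Fin N, j ≠ ⟨i, by omega⟩ → j ≠ ⟨i + 1, hi⟩ → X' j = X j) :
    Real.exp (-energy α X) * lam k l = Real.exp (-energy α X') * lam l k := by
  have hadj : (⟨i, by omega⟩ : Fin N) ⋖ ⟨i + 1, hi⟩ := Fin.covBy_iff.2 (Order.covBy_add_one i)
  have hX' := eq_comp_swap_of_swapped (hX'i.trans hXi1.symm) (hX'i1.trans hXi.symm) hX'other
  have henergy : energy α X' + α k l = energy α X + α l k := by
    simpa only [hX', hXi, hXi1] using energy_comp_swap_add α X hadj
  have hlam : lam k l = Real.exp (α k l - α l k) * lam l k := by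
    rw [hrate, Real.exp_log (div_pos (hpos k l) (hpos l k)), div_mul_cancel₀ _ (hpos l k).ne']
  rw [hlam, ← mul_assoc, ← Real.exp_add]
  congr 2
  linarith
end

section
/- Let N ≥ 2, n ≥ 1, α : Fin n → Fin n → ℝ, and for X : Fin N → Fin n let H(X) = Σ_{i<j} α(X_i, X_j). Let σ : Fin N → Fin N be the cyclic shift σ(i) = i+1 (mod N) and let Y = X ∘ σ be the cyclically shifted configuration. Then H(Y) = H(X) + Σ_{l} N^l(X) · (α(l, k₁) − α(k₁, l)), where k₁ = X_1 is the letter at the first site and N^l(X) = #{ j : X_j = l } is the number of sites carrying the letter l. -/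
open Finset

/-!
Write `X = (k₁, Z)` with `Z` the letters on sites `2, …, N`; the shifted configuration is then
`(Z, k₁)`. Moving `k₁` from the front to the back turns its interactions `α(k₁, Z_j)` with every
other site into `α(Z_j, k₁)`, while the interactions inside `Z` are unchanged. Grouping the other
sites by their letter gives the stated correction (the site `1` itself contributes
`α(k₁, k₁) - α(k₁, k₁) = 0`).
-/

theorem Finset.sum_card_fiber_mul {ι κ R : Type*} [Fintype ι] [Fintype κ] [DecidableEq κ]
    [Semiring R] (X : ι → κ) (f : κ → R) :
    ∑ l, (#{j | X j = l} : R) * f l = ∑ j, f (X j) := by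
  rw [← sum_fiberwise' univ X f]
  simp only [sum_const, nsmul_eq_mul]

section

variable {m n : ℕ} (α : Fin n → Fin n → ℝ)

theorem energy_eq_sum_ite (X : Fin m → Fin n) :
    energy α X = ∑ i, ∑ j, if i < j then α (X i) (X j) else 0 := by
  rw [energy, sum_filter, Fintype.sum_prod_type]

theorem energy_cons (a : Fin n) (Z : Fin m → Fin n) :
    energy α (Fin.cons a Z : Fin (m + 1) → Fin n) = ∑ j, α a (Z j) + energy α Z := by
  simp [energy_eq_sum_ite, Fin.sum_univ_succ]

theorem energy_snoc (a : Fin n) (Z : Fin m → Fin n) :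
    energy α (Fin.snoc Z a : Fin (m + 1) → Fin n) = energy α Z + ∑ j, α (Z j) a := by
  simp [energy_eq_sum_ite, Fin.sum_univ_castSucc, (Fin.castSucc_lt_last _).not_gt, sum_add_distrib]

end

/-- Under the cyclic shift `σ(i) = i + 1 (mod N)`, the energy changes according to
`H(X∘σ) = H(X) + ∑_l N^l(X)·(α(l,k₁) − α(k₁,l))` where `k₁` is the letter at the first
site and `N^l(X)` is the number of sites carrying letter `l`. -/
theorem energy_cyclic_shift (N n : ℕ) (hN : 2 ≤ N)
    (α : Fin n → Fin n → ℝ) (X : Fin N → Fin n)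
    (σ : Fin N → Fin N) (hσ : ∀ i : Fin N, (σ i : ℕ) = ((i : ℕ) + 1) % N)
    (k₁ : Fin n) (hk₁ : X ⟨0, by omega⟩ = k₁) :
    energy α (X ∘ σ) = energy α X +
      ∑ l : Fin n,
        ((Finset.univ.filter (fun j : Fin N => X j = l)).card : ℝ) * (α l k₁ - α k₁ l) := by
  obtain ⟨m, rfl⟩ : ∃ m, N = m + 1 := ⟨N - 1, by omega⟩
  have hσ_rotate : σ = finRotate (m + 1) := by
    funext i
    ext
    rw [hσ, finRotate_apply, Fin.val_add, Fin.val_one', Nat.add_mod_mod]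
  obtain ⟨Z, rfl⟩ : ∃ Z, X = Fin.cons k₁ Z :=
    ⟨Fin.tail X, by rw [← hk₁, ← Fin.cons_self_tail X]; rfl⟩
  have hshift : (Fin.cons k₁ Z : Fin (m + 1) → Fin n) ∘ σ = Fin.snoc Z k₁ := by
    rw [hσ_rotate, Fin.snoc_eq_cons_rotate]; rfl
  rw [hshift, energy_snoc, energy_cons, sum_card_fiber_mul, Fin.sum_univ_succ]
  simp only [Fin.cons_zero, Fin.cons_succ, sub_self, zero_add, sum_sub_distrib]
  ring
end

section
/- Let N ≥ 2, n ≥ 1, α : Fin n → Fin n → ℝ, and for X : Fin N → Fin n let H(X) = Σ_{i<j} α(X_i, X_j). Fix nonnegative integers (N^l)_{l ∈ Fin n} with Σ_l N^l = N and suppose that for every letter k one has Σ_l (α(k,l) − α(l,k)) · N^l = 0. Then for every configuration X whose letter counts are exactly (N^l)_l (i.e. #{ j : X_j = l } = N^l for each l), the energy is invariant under the cyclic shift: H(X ∘ σ) = H(X), where σ(i) = i+1 (mod N). -/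
/-!
Shifting the configuration by one site moves site `0` from the front to the back and preserves
the order of every other pair of sites, so `H(X ∘ σ) - H(X) = ∑_a (α(X_a, X_0) - α(X_0, X_a))`.
Grouping the sites `a` by their letter turns this into `∑_l (α(l, k) - α(k, l)) N^l` with
`k = X_0`, which vanishes by the balance condition.
-/

open Finset

section

variable {M : Type*} [AddCommMonoid M]

theorem Finset.sum_filter_fst_lt_snd {ι : Type*} [Fintype ι] [LinearOrder ι] (f : ι × ι → M) :
    ∑ p ∈ univ.filter (fun p : ι × ι => p.1 < p.2), f p =
      ∑ i, ∑ j, if i < j then f (i, j) else 0 := by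
  rw [sum_filter, Fintype.sum_prod_type]

theorem Fin.sum_sum_ite_lt_succ {m : ℕ} (f : Fin (m + 1) → Fin (m + 1) → M) :
    ∑ i, ∑ j, (if i < j then f i j else 0) =
      ∑ j : Fin m, f 0 j.succ + ∑ i : Fin m, ∑ j : Fin m, if i < j then f i.succ j.succ else 0 := by
  simp [sum_univ_succ, succ_pos]

theorem Fin.sum_sum_ite_lt_castSucc {m : ℕ} (f : Fin (m + 1) → Fin (m + 1) → M) :
    ∑ i, ∑ j, (if i < j then f i j else 0) =
      ∑ i : Fin m, f i.castSucc (last m) +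
        ∑ i : Fin m, ∑ j : Fin m, if i < j then f i.castSucc j.castSucc else 0 := by
  simp [sum_univ_castSucc, castSucc_lt_last, not_lt.2 (le_last _), sum_add_distrib, add_comm]

end

theorem Fin.sum_sum_ite_lt_add_one {M : Type*} [AddCommGroup M] {m : ℕ}
    (f : Fin (m + 1) → Fin (m + 1) → M) :
    ∑ i, ∑ j, (if i < j then f (i + 1) (j + 1) else 0) =
      ∑ i, ∑ j, (if i < j then f i j else 0) + ∑ a, (f a 0 - f 0 a) := by
  -- Split off the pairs ending at `last m` on the left and those starting at `0` on the right:
  -- `castSucc i + 1 = succ i` makes the remaining double sums coincide, and `last m + 1 = 0`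
  -- turns the split-off pairs on the left into the pairs `(a, 0)`.
  rw [sum_sum_ite_lt_castSucc, sum_sum_ite_lt_succ, sum_univ_succ (fun a => f a 0 - f 0 a)]
  simp only [coeSucc_eq_succ, last_add_one, sub_self, sum_sub_distrib, zero_add]
  abel

theorem energy_comp_add_one {m n : ℕ} (α : Fin n → Fin n → ℝ) (X : Fin (m + 1) → Fin n) :
    energy α (X ∘ (· + 1)) = energy α X + ∑ a, (α (X a) (X 0) - α (X 0) (X a)) := by
  simp only [energy, sum_filter_fst_lt_snd, Function.comp_apply]
  exact Fin.sum_sum_ite_lt_add_one fun i j => α (X i) (X j)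

theorem sum_comp_eq_sum_card_fiber_mul {ι κ R : Type*} [Fintype ι] [Fintype κ] [DecidableEq κ]
    [NonAssocSemiring R] (X : ι → κ) (g : κ → R) :
    ∑ a, g (X a) = ∑ l, (#{a | X a = l} : R) * g l := by
  simp [← sum_fiberwise' univ X g, sum_const, nsmul_eq_mul]

theorem energy_cyclic_shift_invariant_general (N n : ℕ)
    (α : Fin n → Fin n → ℝ) (Nl : Fin n → ℕ)
    (hbal : ∀ k : Fin n, ∑ l : Fin n, (α k l - α l k) * (Nl l : ℝ) = 0)
    (X : Fin N → Fin n)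
    (hcount : ∀ l : Fin n, (Finset.univ.filter (fun j : Fin N => X j = l)).card = Nl l)
    (σ : Fin N → Fin N) (hσ : ∀ i : Fin N, (σ i : ℕ) = ((i : ℕ) + 1) % N) :
    energy α (X ∘ σ) = energy α X := by
  cases N with
  | zero => exact congrArg _ (Subsingleton.elim _ _)
  | succ m =>
    obtain rfl : σ = (· + 1) := funext fun i => Fin.ext (by simp [hσ, Fin.val_add])
    have hdrift : ∑ a, (α (X a) (X 0) - α (X 0) (X a)) = 0 := by
      rw [sum_comp_eq_sum_card_fiber_mul X (fun l => α l (X 0) - α (X 0) l), ← neg_eq_zero,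
        ← hbal (X 0), ← sum_neg_distrib]
      refine sum_congr rfl fun l _ => ?_
      rw [hcount]
      ring
    rw [energy_comp_add_one, hdrift, add_zero]

/-- If the letter counts `(N^l)_l` satisfy `∑_l (α(k,l) − α(l,k))·N^l = 0` for every
letter `k`, then the energy of any configuration with these counts is invariant under
the cyclic shift `σ(i) = i + 1 (mod N)`. -/
theorem energy_cyclic_shift_invariant (N n : ℕ) (hN : 2 ≤ N) (hn : 1 ≤ n)
    (α : Fin n → Fin n → ℝ) (Nl : Fin n → ℕ) (hsum : ∑ l : Fin n, Nl l = N)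
    (hbal : ∀ k : Fin n, ∑ l : Fin n, (α k l - α l k) * (Nl l : ℝ) = 0)
    (X : Fin N → Fin n)
    (hcount : ∀ l : Fin n, (Finset.univ.filter (fun j : Fin N => X j = l)).card = Nl l)
    (σ : Fin N → Fin N) (hσ : ∀ i : Fin N, (σ i : ℕ) = ((i : ℕ) + 1) % N) :
    energy α (X ∘ σ) = energy α X :=
  energy_cyclic_shift_invariant_general N n α Nl hbal X hcount σ hσ
end

section
/- Let α, β, γ ∈ ℝ and let ρ_a, ρ_b, ρ_c : ℝ → ℝ be differentiable, strictly positive functions satisfying the Lotka–Volterra system ρ_a' = ρ_a(βρ_c − γρ_b), ρ_b' = ρ_b(γρ_a − αρ_c), ρ_c' = ρ_c(αρ_b − βρ_a) on ℝ. Then the quantity ρ_a^α · ρ_b^β · ρ_c^γ (real powers of positive reals) is a constant of motion: for all x, y ∈ ℝ, ρ_a(x)^α ρ_b(x)^β ρ_c(x)^γ = ρ_a(y)^α ρ_b(y)^β ρ_c(y)^γ. -/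
open Real

/-! Along a positive solution, `log κ = α log ρ_a + β log ρ_b + γ log ρ_c` has derivative
`α (βρ_c − γρ_b) + β (γρ_a − αρ_c) + γ (αρ_b − βρ_a) = 0`, so `log κ`, and hence `κ`, is
constant. -/

theorem hasDerivAt_log_of_deriv_eq_mul {f : ℝ → ℝ} {x g : ℝ} (hf : DifferentiableAt ℝ f x)
    (hfx : f x ≠ 0) (h : deriv f x = f x * g) : HasDerivAt (fun y => log (f y)) g x := by
  have hlog := hf.hasDerivAt.log hfx
  rwa [h, mul_div_cancel_left₀ _ hfx] at hlog

theorem rpow_mul_rpow_mul_rpow_eq_exp {a b c : ℝ} (ha : 0 < a) (hb : 0 < b) (hc : 0 < c)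
    (α β γ : ℝ) : a ^ α * b ^ β * c ^ γ = exp (α * log a + β * log b + γ * log c) := by
  rw [rpow_def_of_pos ha, rpow_def_of_pos hb, rpow_def_of_pos hc, ← exp_add, ← exp_add]
  ring_nf

/-- For strictly positive solutions of the Lotka–Volterra system arising from the ABC
model, the quantity `ρ_a^α · ρ_b^β · ρ_c^γ` (real powers) is a constant of motion. -/
theorem lotka_volterra_kappa_constant (α β γ : ℝ) (ρa ρb ρc : ℝ → ℝ)
    (ha : Differentiable ℝ ρa) (hb : Differentiable ℝ ρb) (hc : Differentiable ℝ ρc)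
    (hapos : ∀ x, 0 < ρa x) (hbpos : ∀ x, 0 < ρb x) (hcpos : ∀ x, 0 < ρc x)
    (hLVa : ∀ x, deriv ρa x = ρa x * (β * ρc x - γ * ρb x))
    (hLVb : ∀ x, deriv ρb x = ρb x * (γ * ρa x - α * ρc x))
    (hLVc : ∀ x, deriv ρc x = ρc x * (α * ρb x - β * ρa x)) :
    ∀ x y : ℝ, ρa x ^ α * ρb x ^ β * ρc x ^ γ = ρa y ^ α * ρb y ^ β * ρc y ^ γ := by
  set logκ : ℝ → ℝ := fun x => α * log (ρa x) + β * log (ρb x) + γ * log (ρc x)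
  have hlogκ : ∀ x, HasDerivAt logκ 0 x := fun x => by
    have hA := hasDerivAt_log_of_deriv_eq_mul (ha x) (hapos x).ne' (hLVa x)
    have hB := hasDerivAt_log_of_deriv_eq_mul (hb x) (hbpos x).ne' (hLVb x)
    have hC := hasDerivAt_log_of_deriv_eq_mul (hc x) (hcpos x).ne' (hLVc x)
    exact (((hA.const_mul α).add (hB.const_mul β)).add (hC.const_mul γ)).congr_deriv (by ring)
  have hconst : ∀ x y, logκ x = logκ y :=
    is_const_of_deriv_eq_zero (fun x => (hlogκ x).differentiableAt) fun x => (hlogκ x).deriv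
  intro x y
  rw [rpow_mul_rpow_mul_rpow_eq_exp (hapos x) (hbpos x) (hcpos x),
    rpow_mul_rpow_mul_rpow_eq_exp (hapos y) (hbpos y) (hcpos y)]
  exact congrArg exp (hconst x y)
end

section
/- Let ρ_a, ρ_b, ρ_c : ℝ → ℝ be differentiable functions satisfying ρ_a' = ρ_a(ρ_c − ρ_b), ρ_b' = ρ_b(ρ_a − ρ_c), ρ_c' = ρ_c(ρ_b − ρ_a) together with the constraint ρ_a(x) + ρ_b(x) + ρ_c(x) = 1 for all x. Then u = ρ_a + ρ_b satisfies, for every x, the identity (u'(x))² = (1 − u(x)) · ( u(x)² (1 − u(x)) − 4 ρ_a(x) ρ_b(x) ρ_c(x) ); moreover the quantity κ = ρ_a ρ_b ρ_c appearing on the right-hand side is constant in x. -/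
/-!
Summing the logarithmic derivatives `ρc − ρb`, `ρa − ρc`, `ρb − ρa` gives zero, so
`κ = ρa ρb ρc` is conserved. For `u = ρa + ρb` one finds `u' = ρc (ρa − ρb)`; then
`(ρa − ρb)² = u² − 4 ρa ρb` and `ρc = 1 − u` turn `(u')²` into the stated cubic in `u`.
-/

theorem mul_mul_eq_of_deriv_eq_mul {f g h p q r : ℝ → ℝ}
    (hf : Differentiable ℝ f) (hg : Differentiable ℝ g) (hh : Differentiable ℝ h)
    (hf' : ∀ x, deriv f x = f x * p x) (hg' : ∀ x, deriv g x = g x * q x)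
    (hh' : ∀ x, deriv h x = h x * r x) (hpqr : ∀ x, p x + q x + r x = 0) (x y : ℝ) :
    f x * g x * h x = f y * g y * h y := by
  have hderiv : ∀ z, deriv (fun t => f t * g t * h t) z = 0 := fun z => by
    rw [deriv_fun_mul (c := fun t => f t * g t) ((hf z).mul (hg z)) (hh z),
      deriv_fun_mul (hf z) (hg z), hf', hg', hh']
    linear_combination f z * g z * h z * hpqr z
  exact is_const_of_deriv_eq_zero ((hf.mul hg).mul hh) hderiv x y

theorem sq_mul_sub_eq_of_add_add_eq_one {R : Type*} [CommRing R] {a b c : R}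
    (h : a + b + c = 1) :
    (c * (a - b)) ^ 2 = (1 - (a + b)) * ((a + b) ^ 2 * (1 - (a + b)) - 4 * (a * b * c)) := by
  obtain rfl : c = 1 - (a + b) := by linear_combination h
  ring

/-- In the symmetric case `α = β = γ = 1` of the ABC Lotka–Volterra system on the
simplex `ρ_a + ρ_b + ρ_c = 1`, the function `u = ρ_a + ρ_b` satisfies
`(u')² = (1 − u)(u²(1 − u) − 4 ρ_a ρ_b ρ_c)`, and `κ = ρ_a ρ_b ρ_c` is constant. -/
theorem lotka_volterra_symmetric_elliptic (ρa ρb ρc : ℝ → ℝ)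
    (ha : Differentiable ℝ ρa) (hb : Differentiable ℝ ρb) (hc : Differentiable ℝ ρc)
    (hLVa : ∀ x, deriv ρa x = ρa x * (ρc x - ρb x))
    (hLVb : ∀ x, deriv ρb x = ρb x * (ρa x - ρc x))
    (hLVc : ∀ x, deriv ρc x = ρc x * (ρb x - ρa x))
    (hsum : ∀ x, ρa x + ρb x + ρc x = 1) :
    (∀ x, (deriv (fun y => ρa y + ρb y) x) ^ 2 =
        (1 - (ρa x + ρb x)) *
          ((ρa x + ρb x) ^ 2 * (1 - (ρa x + ρb x)) - 4 * (ρa x * ρb x * ρc x))) ∧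
    (∀ x y : ℝ, ρa x * ρb x * ρc x = ρa y * ρb y * ρc y) := by
  refine ⟨fun x => ?_, mul_mul_eq_of_deriv_eq_mul ha hb hc hLVa hLVb hLVc fun x => by ring⟩
  have hu : deriv (fun y => ρa y + ρb y) x = ρc x * (ρa x - ρb x) := by
    rw [deriv_fun_add (ha x) (hb x), hLVa, hLVb]
    ring
  rw [hu]
  exact sq_mul_sub_eq_of_add_add_eq_one (hsum x)
end

section
/- Let α, β, γ > 0 and set s = α + β + γ. Then the quadratic form Q(θ) = β(α+γ) cos²θ + 2αβ sinθ cosθ + α(β+γ) sin²θ is strictly positive for all θ, and ∫_0^{2π} s / Q(θ) dθ = 2π √( s / (αβγ) ). In other words, the period T(κ̃) of the Lotka–Volterra orbit degenerated to the fixed point equals 2π √( (α+β+γ) / (αβγ) ). -/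
/-!
The form `Q = a cos² + 2b sin cos + c sin²` with `a > 0` and discriminant `D = ac − b² > 0` is
positive, since `(a + c) Q = (a cos + b sin)² + (c sin + b cos)² + D`. Its reciprocal has the
smooth primitive `(θ + arctan (N θ / (Q θ + √D))) / √D` with `N = Q' / 2`, whose arctan part is
`2π`-periodic, so `∫₀^{2π} 1/Q = 2π/√D`. For the Lotka–Volterra form `D = αβγs`.
-/

open Real

noncomputable def trigQuadForm (a b c θ : ℝ) : ℝ :=
  a * cos θ ^ 2 + 2 * b * sin θ * cos θ + c * sin θ ^ 2

section

variable {a b c : ℝ}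

theorem add_mul_trigQuadForm (θ : ℝ) :
    (a + c) * trigQuadForm a b c θ =
      (a * cos θ + b * sin θ) ^ 2 + (c * sin θ + b * cos θ) ^ 2 + (a * c - b ^ 2) := by
  unfold trigQuadForm
  linear_combination (a * c - b ^ 2) * sin_sq_add_cos_sq θ

theorem trigQuadForm_pos (ha : 0 < a) (hD : b ^ 2 < a * c) (θ : ℝ) :
    0 < trigQuadForm a b c θ := by
  have hc : 0 < c := pos_of_mul_pos_right (by nlinarith) ha.le
  refine pos_of_mul_pos_right (a := a + c) ?_ (by positivity)
  rw [add_mul_trigQuadForm]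
  nlinarith [sq_nonneg (a * cos θ + b * sin θ), sq_nonneg (c * sin θ + b * cos θ)]

theorem trigQuadForm_eq_two_mul (θ : ℝ) :
    trigQuadForm a b c θ = (a + c) / 2 + (a - c) / 2 * cos (2 * θ) + b * sin (2 * θ) := by
  rw [trigQuadForm, cos_two_mul, sin_two_mul]
  linear_combination c * sin_sq_add_cos_sq θ

theorem trigQuadForm_periodic : Function.Periodic (trigQuadForm a b c) (2 * π) := by
  intro θ
  simp only [trigQuadForm, sin_add_two_pi, cos_add_two_pi]

theorem hasDerivAt_trigQuadForm (θ : ℝ) :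
    HasDerivAt (trigQuadForm a b c) (2 * (b * cos (2 * θ) + (c - a) / 2 * sin (2 * θ))) θ := by
  have h := ((((hasDerivAt_cos θ).fun_pow 2).const_mul a).fun_add
    ((((hasDerivAt_sin θ).const_mul (2 * b)).fun_mul (hasDerivAt_cos θ)))).fun_add
    (((hasDerivAt_sin θ).fun_pow 2).const_mul c)
  refine h.congr_deriv ?_
  rw [cos_two_mul, sin_two_mul]
  linear_combination (-2 * b) * sin_sq_add_cos_sq θ

/- `t + arctan (…)` is a continuous branch of the polar angle of `L (cos t, sin t)`, where
`L = [[a, b], [b, c]] + d • 1`. As `L² = (a + c + 2d) • [[a, b], [b, c]]` and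
`det L = d (a + c + 2d)`, this angle has derivative `det L / ‖L (cos t, sin t)‖² = d / Q t`. -/
theorem hasDerivAt_primitive_inv_trigQuadForm {d : ℝ} (ha : 0 < a) (hd : 0 < d)
    (hd2 : d ^ 2 = a * c - b ^ 2) (θ : ℝ) :
    HasDerivAt
      (fun t ↦ (t + arctan ((b * cos (2 * t) + (c - a) / 2 * sin (2 * t)) /
        (trigQuadForm a b c t + d))) / d)
      (trigQuadForm a b c θ)⁻¹ θ := by
  set Q := trigQuadForm a b c θ with hQ
  set N := b * cos (2 * θ) + (c - a) / 2 * sin (2 * θ)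
  set p := (a + c) / 2
  have hQpos : 0 < Q := trigQuadForm_pos ha (by nlinarith) θ
  have hN' : HasDerivAt (fun t ↦ b * cos (2 * t) + (c - a) / 2 * sin (2 * t))
      (-2 * (Q - p)) θ := by
    have h2 := (hasDerivAt_id θ).const_mul 2
    have h := ((hasDerivAt_cos (2 * θ)).comp θ h2).const_mul b |>.add
      (((hasDerivAt_sin (2 * θ)).comp θ h2).const_mul ((c - a) / 2))
    refine h.congr_deriv ?_
    rw [hQ, trigQuadForm_eq_two_mul]
    ring
  have hpyth : N ^ 2 + (Q - p) ^ 2 = p ^ 2 - d ^ 2 := by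
    rw [hQ, trigQuadForm_eq_two_mul, hd2]
    linear_combination ((a - c) ^ 2 / 4 + b ^ 2) * sin_sq_add_cos_sq (2 * θ)
  have hM : Q + d ≠ 0 := by positivity
  have h := ((hasDerivAt_id θ).add
    ((hN'.div ((hasDerivAt_trigQuadForm θ).add_const d) hM).arctan)).div_const d
  refine h.congr_deriv ?_
  show (1 + 1 / (1 + (N / (Q + d)) ^ 2) * ((-2 * (Q - p) * (Q + d) - N * (2 * N)) / (Q + d) ^ 2)) / d
    = Q⁻¹
  clear_value Q N p
  field_simp
  linear_combination (-(Q + d)) * hpyth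

theorem integral_inv_trigQuadForm (ha : 0 < a) (hD : b ^ 2 < a * c) :
    ∫ θ in (0 : ℝ)..(2 * π), (trigQuadForm a b c θ)⁻¹ = 2 * π / √(a * c - b ^ 2) := by
  have hd : 0 < √(a * c - b ^ 2) := sqrt_pos.2 (by linarith)
  have hd2 : √(a * c - b ^ 2) ^ 2 = a * c - b ^ 2 := sq_sqrt (by linarith)
  have hcont : Continuous fun θ ↦ (trigQuadForm a b c θ)⁻¹ :=
    (by unfold trigQuadForm; fun_prop : Continuous (trigQuadForm a b c)).inv₀
      fun θ ↦ (trigQuadForm_pos ha hD θ).ne'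
  rw [intervalIntegral.integral_eq_sub_of_hasDerivAt
    (fun θ _ ↦ hasDerivAt_primitive_inv_trigQuadForm ha hd hd2 θ) (hcont.intervalIntegrable _ _)]
  have hcos : cos (2 * (2 * π)) = 1 := by exact_mod_cast cos_nat_mul_two_pi 2
  have hsin : sin (2 * (2 * π)) = 0 := by
    rw [← mul_assoc]; exact_mod_cast sin_nat_mul_pi (2 * 2)
  simp only [hcos, hsin, mul_zero, cos_zero, sin_zero, trigQuadForm_periodic.eq]
  ring
end

/-- The quadratic form `Q(θ) = β(α+γ)cos²θ + 2αβ sinθ cosθ + α(β+γ)sin²θ` is strictly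
positive, and the period of the Lotka–Volterra orbit degenerated to the fixed point is
`T(κ̃) = ∫_0^{2π} s/Q(θ) dθ = 2π √(s/(αβγ))`, where `s = α + β + γ`. -/
theorem period_at_fixed_point (α β γ : ℝ) (hα : 0 < α) (hβ : 0 < β) (hγ : 0 < γ)
    (s : ℝ) (hs : s = α + β + γ) (Q : ℝ → ℝ)
    (hQ : ∀ θ, Q θ = β * (α + γ) * Real.cos θ ^ 2 +
        2 * α * β * Real.sin θ * Real.cos θ + α * (β + γ) * Real.sin θ ^ 2) :
    (∀ θ, 0 < Q θ) ∧
      ∫ θ in (0 : ℝ)..(2 * Real.pi), s / Q θ =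
        2 * Real.pi * Real.sqrt (s / (α * β * γ)) := by
  have hform : Q = trigQuadForm (β * (α + γ)) (α * β) (α * (β + γ)) :=
    funext fun θ ↦ by rw [hQ, trigQuadForm]; ring
  have hdisc : β * (α + γ) * (α * (β + γ)) - (α * β) ^ 2 = α * β * γ * s := by rw [hs]; ring
  have hpos : 0 < α * β * γ * s := by rw [hs]; positivity
  have hD : (α * β) ^ 2 < β * (α + γ) * (α * (β + γ)) := by linarith
  refine ⟨hform ▸ trigQuadForm_pos (by positivity) hD, ?_⟩
  calc ∫ θ in (0 : ℝ)..(2 * π), s / Q θ = s * ∫ θ in (0 : ℝ)..(2 * π), (Q θ)⁻¹ := by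
        simp only [div_eq_mul_inv, intervalIntegral.integral_const_mul]
    _ = s * (2 * π / √(α * β * γ * s)) := by
        rw [hform, integral_inv_trigQuadForm (by positivity) hD, hdisc]
    _ = 2 * π * √(s / (α * β * γ)) := by
        rw [sqrt_mul (by positivity), sqrt_div' _ (by positivity), mul_div_left_comm, ← div_div,
          div_right_comm, div_sqrt]
end
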